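/- arXiv:2402.14557 — 4 statements merged into one kernel-verified Lean document; each statement's English description precedes it below -/
import Mathlib

section
/- Let K be an order-enriched category with subkernel pairs and coinserters of subcongruences, and let G be a subregularly projective strong generator with copowers. Then G is subeffective (its hom-functor K(G,−) : K → Pos sends coinserters of subcongruences to coinserters in Pos) if and only if K has effective subcongruences (every subcongruence is the subkernel pair of some morphism). -/
open CategoryTheory

universe v u

namespace Paper

/- An order-enriched category: a category with a partial order on each hom-set
such that composition is monotone in both variables. -/
variable {K : Type u} [Category.{v} K] [∀ X Y : K, PartialOrder (X ⟶ Y)]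

/-- Composition is monotone in both variables. -/
def CompMonotone (K : Type u) [Category.{v} K] [∀ X Y : K, PartialOrder (X ⟶ Y)] : Prop :=
  ∀ (X Y Z : K) (f f' : X ⟶ Y) (g g' : Y ⟶ Z), f ≤ f' → g ≤ g' → f ≫ g ≤ f' ≫ g'

/-- `c` is a coinserter of the parallel pair `f0, f1`. -/
def IsCoinserterOf {X Y Z : K} (f0 f1 : X ⟶ Y) (c : Y ⟶ Z) : Prop :=
  f0 ≫ c ≤ f1 ≫ c ∧
    (∀ (Z' : K) (c' : Y ⟶ Z'), f0 ≫ c' ≤ f1 ≫ c' → ∃ g : Z ⟶ Z', c ≫ g = c') ∧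
    (∀ (U : K) (u0 u1 : Z ⟶ U), c ≫ u0 ≤ c ≫ u1 → u0 ≤ u1)

/-- A reflexive pair: a parallel pair with a joint splitting. -/
def ReflexivePair {X Y : K} (f0 f1 : X ⟶ Y) : Prop :=
  ∃ d : Y ⟶ X, d ≫ f0 = 𝟙 Y ∧ d ≫ f1 = 𝟙 Y

/-- A subregular epimorphism: a coinserter of a reflexive pair. -/
def IsSubregularEpi {Y Z : K} (c : Y ⟶ Z) : Prop :=
  ∃ (X : K) (f0 f1 : X ⟶ Y), ReflexivePair f0 f1 ∧ IsCoinserterOf f0 f1 c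

/-- `G` is a subregular projective: morphisms from `G` factor through subregular
epimorphisms. -/
def SubregularProjective (G : K) : Prop :=
  ∀ (A B : K) (e : A ⟶ B), IsSubregularEpi e → ∀ g : G ⟶ B, ∃ f : G ⟶ A, f ≫ e = g

/-- `r0, r1` is collectively order-reflecting. -/
def CollOrderReflecting {R A : K} (r0 r1 : R ⟶ A) : Prop :=
  ∀ (X : K) (f f' : X ⟶ R), f ≫ r0 ≤ f' ≫ r0 → f ≫ r1 ≤ f' ≫ r1 → f ≤ f'

/-- `r0, r1` is the subkernel pair of `h`: the universal pair with `h∘r0 ≤ h∘r1`. -/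
def IsSubkernelPairOf {R A B : K} (r0 r1 : R ⟶ A) (h : A ⟶ B) : Prop :=
  CollOrderReflecting r0 r1 ∧ r0 ≫ h ≤ r1 ≫ h ∧
    ∀ (V : K) (v0 v1 : V ⟶ A), v0 ≫ h ≤ v1 ≫ h →
      ∃ t : V ⟶ R, t ≫ r0 = v0 ∧ t ≫ r1 = v1

def HasSubkernelPairs (K : Type u) [Category.{v} K]
    [∀ X Y : K, PartialOrder (X ⟶ Y)] : Prop :=
  ∀ (A B : K) (h : A ⟶ B), ∃ (R : K) (r0 r1 : R ⟶ A), IsSubkernelPairOf r0 r1 h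

def HasCoinsertersOfSubkernelPairs (K : Type u) [Category.{v} K]
    [∀ X Y : K, PartialOrder (X ⟶ Y)] : Prop :=
  ∀ (R A B : K) (h : A ⟶ B) (r0 r1 : R ⟶ A), IsSubkernelPairOf r0 r1 h →
    ∃ (C : K) (c : A ⟶ C), IsCoinserterOf r0 r1 c

def HasReflexiveCoinserters (K : Type u) [Category.{v} K]
    [∀ X Y : K, PartialOrder (X ⟶ Y)] : Prop :=
  ∀ (X Y : K) (f0 f1 : X ⟶ Y), ReflexivePair f0 f1 →
    ∃ (Z : K) (c : Y ⟶ Z), IsCoinserterOf f0 f1 c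

/-- `G` is a strong generator in the enriched sense: the hom-functor
`K(G,−) : K → Pos` reflects isomorphisms. -/
def StrongGeneratorE (G : K) : Prop :=
  ∀ (A B : K) (h : A ⟶ B),
    Function.Bijective (fun f : G ⟶ A => f ≫ h) →
    (∀ f f' : G ⟶ A, f ≫ h ≤ f' ≫ h ↔ f ≤ f') → IsIso h

/-- `C` with injections `ι` is a copower `M·G` in the enriched sense: the canonical
map `K(M·G, X) → K(G,X)^M` is an order-isomorphism. -/
def IsEnrCopower (G : K) (M : Type v) (C : K) (ι : M → (G ⟶ C)) : Prop :=
  (∀ (X : K) (g : M → (G ⟶ X)), ∃! d : C ⟶ X, ∀ m, ι m ≫ d = g m) ∧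
  (∀ (X : K) (d d' : C ⟶ X), (∀ m, ι m ≫ d ≤ ι m ≫ d') → d ≤ d')

/-- `G` has copowers (with the enriched universal property). -/
def HasEnrCopowers (G : K) : Prop :=
  ∀ M : Type v, ∃ (C : K) (ι : M → (G ⟶ C)), IsEnrCopower G M C ι

/-- `G` is abstractly finite: every morphism from `G` into a copower `M·G` factors
through the subcopower induced by a finite subset `M₀ ⊆ M`. -/
def AbstractlyFiniteE (G : K) : Prop :=
  ∀ (M : Type v) (C : K) (ι : M → (G ⟶ C)), IsEnrCopower G M C ι →
    ∀ f : G ⟶ C, ∃ M₀ : Set M, M₀.Finite ∧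
      ∀ (C₀ : K) (ι₀ : M₀ → (G ⟶ C₀)) (u : C₀ ⟶ C),
        IsEnrCopower G M₀ C₀ ι₀ → (∀ m : M₀, ι₀ m ≫ u = ι m.1) →
          ∃ g : G ⟶ C₀, g ≫ u = f

/-- A subvarietal generator: a strong generator with copowers which is abstractly
finite and subregularly projective. -/
def SubvarietalGenerator (G : K) : Prop :=
  HasEnrCopowers G ∧ StrongGeneratorE G ∧ AbstractlyFiniteE G ∧ SubregularProjective G

/-- The pair `s0, s1` factorizes through the relation `r0, r1`. -/
def FactorsE {R A S : K} (r0 r1 : R ⟶ A) (s0 s1 : S ⟶ A) : Prop :=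
  ∃ t : S ⟶ R, t ≫ r0 = s0 ∧ t ≫ r1 = s1

/-- A subcongruence: an order-reflexive and transitive relation. -/
def IsSubcongruence {R A : K} (r0 r1 : R ⟶ A) : Prop :=
  CollOrderReflecting r0 r1 ∧
  (∀ (S : K) (s0 s1 : S ⟶ A), s0 ≤ s1 → FactorsE r0 r1 s0 s1) ∧
  (∀ (S : K) (s s' s'' : S ⟶ A),
    FactorsE r0 r1 s s' → FactorsE r0 r1 s' s'' → FactorsE r0 r1 s s'')

def HasCoinsertersOfSubcongruences (K : Type u) [Category.{v} K]
    [∀ X Y : K, PartialOrder (X ⟶ Y)] : Prop :=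
  ∀ (R A : K) (r0 r1 : R ⟶ A), IsSubcongruence r0 r1 →
    ∃ (C : K) (c : A ⟶ C), IsCoinserterOf r0 r1 c

/-- `K` has effective subcongruences: every subcongruence is a subkernel pair. -/
def EffectiveSubcongruences (K : Type u) [Category.{v} K]
    [∀ X Y : K, PartialOrder (X ⟶ Y)] : Prop :=
  ∀ (R A : K) (r0 r1 : R ⟶ A), IsSubcongruence r0 r1 →
    ∃ (B : K) (h : A ⟶ B), IsSubkernelPairOf r0 r1 h

/-- A coinserter diagram in `Pos`. -/
def IsCoinserterOfPos {P Q Z : Type v} [PartialOrder P] [PartialOrder Q] [PartialOrder Z]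
    (u v : P → Q) (q : Q → Z) : Prop :=
  (∀ p, q (u p) ≤ q (v p)) ∧
  (∀ (Z' : Type v) [PartialOrder Z'] (h : Q →o Z'), (∀ p, h (u p) ≤ h (v p)) →
      ∃ k : Z → Z', Monotone k ∧ ∀ x, k (q x) = h x) ∧
  (∀ (Z' : Type v) [PartialOrder Z'] (k0 k1 : Z →o Z'),
      (∀ x, k0 (q x) ≤ k1 (q x)) → k0 ≤ k1)

/-- `G` is subeffective: its hom-functor `K(G,−) : K → Pos` sends coinserters of
subcongruences to coinserters in `Pos`. -/
def SubeffectiveObject (G : K) : Prop :=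
  ∀ (R A : K) (r0 r1 : R ⟶ A), IsSubcongruence r0 r1 →
    ∀ (C : K) (c : A ⟶ C), IsCoinserterOf r0 r1 c →
      IsCoinserterOfPos (fun f : G ⟶ R => f ≫ r0) (fun f : G ⟶ R => f ≫ r1)
        (fun g : G ⟶ A => g ≫ c)

/-- `m` is an embedding: `m∘u0 ≤ m∘u1` implies `u0 ≤ u1`. -/
def EmbeddingMor {C B : K} (m : C ⟶ B) : Prop :=
  ∀ (U : K) (u0 u1 : U ⟶ C), u0 ≫ m ≤ u1 ≫ m → u0 ≤ u1

/-- The square with projections `f', e'` is a pullback of `e` along `f`. -/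
def IsPullbackOfE {P A B Q : K} (f' : P ⟶ A) (e' : P ⟶ B) (e : A ⟶ Q) (f : B ⟶ Q) : Prop :=
  f' ≫ e = e' ≫ f ∧
    ∀ (S : K) (a : S ⟶ A) (b : S ⟶ B), a ≫ e = b ≫ f →
      ∃! t : S ⟶ P, t ≫ f' = a ∧ t ≫ e' = b

/-- in an order-enriched category with subkernel pairs and coinserters of
subcongruences, a subregularly projective strong generator with copowers is subeffective
iff the category has effective subcongruences. -/
theorem stmt16 {K : Type u} [Category.{v} K] [∀ X Y : K, PartialOrder (X ⟶ Y)]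
    (hcomp : CompMonotone K)
    (hskp : HasSubkernelPairs K) (hcoins : HasCoinsertersOfSubcongruences K)
    (G : K) (hcop : HasEnrCopowers G) (hproj : SubregularProjective G)
    (hstrong : StrongGeneratorE G) :
    SubeffectiveObject G ↔ EffectiveSubcongruences K := by
  constructor
  · -- Subeffective → effective subcongruences
    intro hsub R A r0 r1 hcong
    obtain ⟨C, c, hc⟩ := hcoins R A r0 r1 hcong
    refine ⟨C, c, hcong.1, hc.1, ?_⟩
    obtain ⟨S, k0, k1, hk⟩ := hskp A C c
    obtain ⟨t, ht0, ht1⟩ := hk.2.2 R r0 r1 hc.1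
    have hpos := hsub R A r0 r1 hcong C c hc
    -- the "down-set" order-hom into Set (G ⟶ A)
    have hmono : ∀ g g' : G ⟶ A, g ≤ g' →
        {x : G ⟶ A | FactorsE r0 r1 x g} ⊆ {x | FactorsE r0 r1 x g'} := by
      intro g g' hle x hx
      exact hcong.2.2 G x g g' hx (hcong.2.1 G g g' hle)
    have hrel : ∀ p : G ⟶ R,
        {x : G ⟶ A | FactorsE r0 r1 x (p ≫ r0)} ⊆ {x | FactorsE r0 r1 x (p ≫ r1)} := by
      intro p x hx
      exact hcong.2.2 G x (p ≫ r0) (p ≫ r1) hx ⟨p, rfl, rfl⟩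
    obtain ⟨k, kmono, hkq⟩ := hpos.2.1 (Set (G ⟶ A))
      ⟨fun g => {x : G ⟶ A | FactorsE r0 r1 x g}, fun _ _ hle => hmono _ _ hle⟩ hrel
    -- key: morphisms G → A merged by c factor through the relation
    have key : ∀ g0 g1 : G ⟶ A, g0 ≫ c ≤ g1 ≫ c → FactorsE r0 r1 g0 g1 := by
      intro g0 g1 hle
      have h1 : k (g0 ≫ c) ≤ k (g1 ≫ c) := kmono hle
      rw [hkq g0, hkq g1] at h1
      exact h1 (hcong.2.1 G g0 g0 le_rfl)
    -- t is an iso by the strong generator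
    have hbij : Function.Bijective (fun f : G ⟶ R => f ≫ t) := by
      constructor
      · intro f f' hf
        simp only at hf
        have e0 : f ≫ r0 = f' ≫ r0 := by
          rw [← ht0, ← Category.assoc, ← Category.assoc, hf]
        have e1 : f ≫ r1 = f' ≫ r1 := by
          rw [← ht1, ← Category.assoc, ← Category.assoc, hf]
        exact le_antisymm (hcong.1 G f f' e0.le e1.le)
          (hcong.1 G f' f e0.ge e1.ge)
      · intro s
        have hle : (s ≫ k0) ≫ c ≤ (s ≫ k1) ≫ c := by
          have := hcomp G S C s s (k0 ≫ c) (k1 ≫ c) le_rfl hk.2.1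
          simpa [Category.assoc] using this
        obtain ⟨w, hw0, hw1⟩ := key (s ≫ k0) (s ≫ k1) hle
        refine ⟨w, ?_⟩
        have e0 : (w ≫ t) ≫ k0 = s ≫ k0 := by
          rw [Category.assoc, ht0]; exact hw0
        have e1 : (w ≫ t) ≫ k1 = s ≫ k1 := by
          rw [Category.assoc, ht1]; exact hw1
        exact le_antisymm (hk.1 G (w ≫ t) s e0.le e1.le)
          (hk.1 G s (w ≫ t) e0.ge e1.ge)
    have hiff : ∀ f f' : G ⟶ R, f ≫ t ≤ f' ≫ t ↔ f ≤ f' := by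
      intro f f'
      constructor
      · intro hle
        have h0 : f ≫ r0 ≤ f' ≫ r0 := by
          have := hcomp G S A (f ≫ t) (f' ≫ t) k0 k0 hle le_rfl
          simpa [Category.assoc, ht0] using this
        have h1 : f ≫ r1 ≤ f' ≫ r1 := by
          have := hcomp G S A (f ≫ t) (f' ≫ t) k1 k1 hle le_rfl
          simpa [Category.assoc, ht1] using this
        exact hcong.1 G f f' h0 h1
      · intro hle
        exact hcomp G R S f f' t t hle le_rfl
    have : IsIso t := hstrong R S t hbij hiff
    intro V v0 v1 hv
    obtain ⟨s, hs0, hs1⟩ := hk.2.2 V v0 v1 hv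
    refine ⟨s ≫ inv t, ?_, ?_⟩
    · rw [Category.assoc, ← ht0, IsIso.inv_hom_id_assoc]; exact hs0
    · rw [Category.assoc, ← ht1, IsIso.inv_hom_id_assoc]; exact hs1
  · -- effective subcongruences → subeffective
    intro heff R A r0 r1 hcong C c hc
    obtain ⟨B, h, hskB⟩ := heff R A r0 r1 hcong
    obtain ⟨m, hm⟩ := hc.2.1 B h hskB.2.1
    have key : ∀ (V : K) (v0 v1 : V ⟶ A), v0 ≫ c ≤ v1 ≫ c → FactorsE r0 r1 v0 v1 := by
      intro V v0 v1 hv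
      apply hskB.2.2 V v0 v1
      have := hcomp V C B (v0 ≫ c) (v1 ≫ c) m m hv le_rfl
      simpa [Category.assoc, hm] using this
    have hrefl : ReflexivePair r0 r1 := by
      obtain ⟨d, hd0, hd1⟩ := hcong.2.1 A (𝟙 A) (𝟙 A) le_rfl
      exact ⟨d, hd0, hd1⟩
    have hsurj : ∀ g : G ⟶ C, ∃ a : G ⟶ A, a ≫ c = g :=
      hproj A C c ⟨R, r0, r1, hrefl, hc⟩
    refine ⟨?_, ?_, ?_⟩
    · intro f
      have := hcomp G R C f f (r0 ≫ c) (r1 ≫ c) le_rfl hc.1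
      simpa [Category.assoc] using this
    · intro Z' _ hOm hcond
      choose a ha using hsurj
      have fact : ∀ x y : G ⟶ A, x ≫ c ≤ y ≫ c → hOm x ≤ hOm y := by
        intro x y hle
        obtain ⟨t, ht0, ht1⟩ := key G x y hle
        rw [← ht0, ← ht1]
        exact hcond t
      refine ⟨fun g => hOm (a g), ?_, ?_⟩
      · intro g g' hle
        exact fact _ _ (by rw [ha g, ha g']; exact hle)
      · intro x
        have h1 : a (x ≫ c) ≫ c = x ≫ c := ha _
        exact le_antisymm (fact _ _ h1.le) (fact _ _ h1.ge)
    · intro Z' _ k0 k1 hcond y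
      obtain ⟨a, ha⟩ := hsurj y
      rw [← ha]
      exact hcond a


end Paper
end

section
/- If an order-enriched category has subkernel pairs, coinserters of reflexive pairs, and a subvarietal generator, then it is complete and cocomplete (it has all small limits and all small colimits). -/
open CategoryTheory

universe v u

namespace Paper

/- An order-enriched category: a category with a partial order on each hom-set
such that composition is monotone in both variables. -/
variable {K : Type u} [Category.{v} K] [∀ X Y : K, PartialOrder (X ⟶ Y)]

section Aux

variable {K : Type u} [Category.{v} K] [∀ X Y : K, PartialOrder (X ⟶ Y)]

lemma pre_le (hcomp : CompMonotone K) {X Y Z : K} (f : X ⟶ Y) {g g' : Y ⟶ Z}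
    (h : g ≤ g') : f ≫ g ≤ f ≫ g' := hcomp X Y Z f f g g' le_rfl h

lemma post_le (hcomp : CompMonotone K) {X Y Z : K} {f f' : X ⟶ Y} (g : Y ⟶ Z)
    (h : f ≤ f') : f ≫ g ≤ f' ≫ g := hcomp X Y Z f f' g g h le_rfl

lemma coins_cancel {X Y Z : K} {f0 f1 : X ⟶ Y} {c : Y ⟶ Z} (hc : IsCoinserterOf f0 f1 c)
    {U : K} {u v : Z ⟶ U} (h : c ≫ u = c ≫ v) : u = v :=
  le_antisymm (hc.2.2 _ _ _ h.le) (hc.2.2 _ _ _ h.ge)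

variable {G : K}

section Cop
variable (hcp : HasEnrCopowers G)

noncomputable def copObj (M : Type v) : K := (hcp M).choose

noncomputable def copι (M : Type v) : M → (G ⟶ copObj hcp M) :=
  (hcp M).choose_spec.choose

lemma cop_isCopower (M : Type v) : IsEnrCopower G M (copObj hcp M) (copι hcp M) :=
  (hcp M).choose_spec.choose_spec

noncomputable def copDesc {M : Type v} {X : K} (g : M → (G ⟶ X)) : copObj hcp M ⟶ X :=
  ((cop_isCopower hcp M).1 X g).exists.choose

@[simp] lemma copDesc_fac {M : Type v} {X : K} (g : M → (G ⟶ X)) (m : M) :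
    copι hcp M m ≫ copDesc hcp g = g m :=
  ((cop_isCopower hcp M).1 X g).exists.choose_spec m

lemma cop_hom_ext {M : Type v} {X : K} {d d' : copObj hcp M ⟶ X}
    (h : ∀ m, copι hcp M m ≫ d = copι hcp M m ≫ d') : d = d' :=
  ((cop_isCopower hcp M).1 X (fun m => copι hcp M m ≫ d)).unique
    (fun _ => rfl) (fun m => (h m).symm)

lemma cop_hom_le {M : Type v} {X : K} {d d' : copObj hcp M ⟶ X}
    (h : ∀ m, copι hcp M m ≫ d ≤ copι hcp M m ≫ d') : d ≤ d' :=
  (cop_isCopower hcp M).2 X d d' h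

noncomputable def eps (A : K) : copObj hcp (G ⟶ A) ⟶ A := copDesc hcp (fun f => f)

@[simp] lemma eps_fac {A : K} (f : G ⟶ A) : copι hcp (G ⟶ A) f ≫ eps hcp A = f :=
  copDesc_fac hcp _ f

end Cop

lemma lift_through (hproj : SubregularProjective G) {X Y Z : K} {f0 f1 : X ⟶ Y} {c : Y ⟶ Z}
    (hr : ReflexivePair f0 f1) (hc : IsCoinserterOf f0 f1 c) (g : G ⟶ Z) :
    ∃ f : G ⟶ Y, f ≫ c = g :=
  hproj Y Z c ⟨X, f0, f1, hr, hc⟩ g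

lemma coins_comp_iso (hcomp : CompMonotone K) {X Y Z : K} {f0 f1 : X ⟶ Y} {c : Y ⟶ Z}
    (hc : IsCoinserterOf f0 f1 c) {Z' : K} (h : Z ⟶ Z') [IsIso h] :
    IsCoinserterOf f0 f1 (c ≫ h) := by
  refine ⟨?_, ?_, ?_⟩
  · rw [← Category.assoc, ← Category.assoc]
    exact post_le hcomp h hc.1
  · intro W c' hle
    obtain ⟨g, hg⟩ := hc.2.1 W c' hle
    exact ⟨inv h ≫ g, by simp [hg]⟩
  · intro U u0 u1 hle
    simp only [Category.assoc] at hle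
    have h2 := hc.2.2 _ _ _ hle
    have h3 := pre_le hcomp (inv h) h2
    simpa using h3

/-- Step A: the canonical morphism `ε_A` is a coinserter of its subkernel pair. -/
lemma eps_coins (hcomp : CompMonotone K) (hskp : HasSubkernelPairs K)
    (hcoins : HasReflexiveCoinserters K) (hcp : HasEnrCopowers G)
    (hsg : StrongGeneratorE G) (hproj : SubregularProjective G) (A : K) :
    ∃ (R : K) (r0 r1 : R ⟶ copObj hcp (G ⟶ A)),
      IsSubkernelPairOf r0 r1 (eps hcp A) ∧ IsCoinserterOf r0 r1 (eps hcp A) := by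
  obtain ⟨R, r0, r1, hr⟩ := hskp _ _ (eps hcp A)
  obtain ⟨d, hd0, hd1⟩ := hr.2.2 _ (𝟙 _) (𝟙 _) le_rfl
  have hrefl : ReflexivePair r0 r1 := ⟨d, hd0, hd1⟩
  obtain ⟨Q, c, hc⟩ := hcoins _ _ r0 r1 hrefl
  obtain ⟨h, hh⟩ := hc.2.1 _ (eps hcp A) hr.2.1
  have key : ∀ f f' : G ⟶ Q, f ≫ h ≤ f' ≫ h → f ≤ f' := by
    intro f f' hle
    obtain ⟨w, hw⟩ := lift_through hproj hrefl hc f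
    obtain ⟨w', hw'⟩ := lift_through hproj hrefl hc f'
    have hlee : w ≫ eps hcp A ≤ w' ≫ eps hcp A := by
      rw [← hh, ← Category.assoc, ← Category.assoc, hw, hw']
      exact hle
    obtain ⟨t, ht0, ht1⟩ := hr.2.2 _ w w' hlee
    calc f = (t ≫ r0) ≫ c := by rw [ht0, hw]
      _ = t ≫ (r0 ≫ c) := by rw [Category.assoc]
      _ ≤ t ≫ (r1 ≫ c) := pre_le hcomp t hc.1
      _ = (t ≫ r1) ≫ c := by rw [Category.assoc]
      _ = f' := by rw [ht1, hw']
  have hiso : IsIso h := by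
    apply hsg _ _ h
    · constructor
      · intro f f' hee
        exact le_antisymm (key _ _ hee.le) (key _ _ hee.ge)
      · intro g
        exact ⟨copι hcp _ g ≫ c, by show (copι hcp (G ⟶ A) g ≫ c) ≫ h = g; rw [Category.assoc, hh, eps_fac]⟩
    · intro f f'
      exact ⟨key f f', fun hle => post_le hcomp h hle⟩
  refine ⟨R, r0, r1, hr, ?_⟩
  have := coins_comp_iso hcomp hc h
  rwa [hh] at this

/-- Presentation: `ε_A` is a coinserter of a pair between copowers of `G`. -/
lemma eps_pres (hcomp : CompMonotone K) (hskp : HasSubkernelPairs K)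
    (hcoins : HasReflexiveCoinserters K) (hcp : HasEnrCopowers G)
    (hsg : StrongGeneratorE G) (hproj : SubregularProjective G) (A : K) :
    ∃ (P : Type v) (a0 a1 : P → (G ⟶ copObj hcp (G ⟶ A))),
      IsCoinserterOf (copDesc hcp a0) (copDesc hcp a1) (eps hcp A) := by
  obtain ⟨R, r0, r1, hsk, hco⟩ := eps_coins hcomp hskp hcoins hcp hsg hproj A
  obtain ⟨R', s0, s1, hsk', hco'⟩ := eps_coins hcomp hskp hcoins hcp hsg hproj R
  refine ⟨(G ⟶ R), fun x => x ≫ r0, fun x => x ≫ r1, ?_, ?_, ?_⟩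
  · have e0 : copDesc hcp (fun x : G ⟶ R => x ≫ r0) = eps hcp R ≫ r0 :=
      cop_hom_ext hcp (fun m => by rw [copDesc_fac, ← Category.assoc, eps_fac])
    have e1 : copDesc hcp (fun x : G ⟶ R => x ≫ r1) = eps hcp R ≫ r1 :=
      cop_hom_ext hcp (fun m => by rw [copDesc_fac, ← Category.assoc, eps_fac])
    rw [e0, e1, Category.assoc, Category.assoc]
    exact pre_le hcomp _ hco.1
  · intro Z' c' hle
    apply hco.2.1
    have e0 : copDesc hcp (fun x : G ⟶ R => x ≫ r0) = eps hcp R ≫ r0 :=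
      cop_hom_ext hcp (fun m => by rw [copDesc_fac, ← Category.assoc, eps_fac])
    have e1 : copDesc hcp (fun x : G ⟶ R => x ≫ r1) = eps hcp R ≫ r1 :=
      cop_hom_ext hcp (fun m => by rw [copDesc_fac, ← Category.assoc, eps_fac])
    rw [e0, e1, Category.assoc, Category.assoc] at hle
    exact hco'.2.2 _ _ _ hle
  · exact hco.2.2

end Aux
section Constructions

variable {K : Type u} [Category.{v} K] [∀ X Y : K, PartialOrder (X ⟶ Y)] {G : K}

lemma hasColimitAux (hcomp : CompMonotone K) (hskp : HasSubkernelPairs K)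
    (hcoins : HasReflexiveCoinserters K) (hcp : HasEnrCopowers G)
    (hsg : StrongGeneratorE G) (hproj : SubregularProjective G)
    {J : Type v} [Category.{v} J] (D : J ⥤ K) : Limits.HasColimit D := by
  classical
  choose P a0 a1 hpres using fun j => eps_pres hcomp hskp hcoins hcp hsg hproj (D.obj j)
  let MJ : Type v := Σ j : J, (G ⟶ D.obj j)
  let k : ∀ j : J, copObj hcp (G ⟶ D.obj j) ⟶ copObj hcp MJ :=
    fun j => copDesc hcp (fun f => copι hcp MJ ⟨j, f⟩)
  have hk : ∀ (j : J) (f : G ⟶ D.obj j),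
      copι hcp (G ⟶ D.obj j) f ≫ k j = copι hcp MJ ⟨j, f⟩ :=
    fun j f => copDesc_fac hcp _ f
  let S : Type v := Σ j : J, Σ j' : J, (j ⟶ j') × (G ⟶ D.obj j)
  let T : Type v := (Σ j : J, P j) ⊕ S ⊕ S
  let b0 : T → (G ⟶ copObj hcp MJ) := fun t =>
    match t with
    | Sum.inl ⟨j, x⟩ => a0 j x ≫ k j
    | Sum.inr (Sum.inl ⟨j, _, _, f⟩) => copι hcp MJ ⟨j, f⟩
    | Sum.inr (Sum.inr ⟨j, j', α, f⟩) => copι hcp MJ ⟨j', f ≫ D.map α⟩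
  let b1 : T → (G ⟶ copObj hcp MJ) := fun t =>
    match t with
    | Sum.inl ⟨j, x⟩ => a1 j x ≫ k j
    | Sum.inr (Sum.inl ⟨j, j', α, f⟩) => copι hcp MJ ⟨j', f ≫ D.map α⟩
    | Sum.inr (Sum.inr ⟨j, _, _, f⟩) => copι hcp MJ ⟨j, f⟩
  have hrefl : ReflexivePair (copDesc hcp b0) (copDesc hcp b1) := by
    refine ⟨copDesc hcp (fun m : MJ =>
      copι hcp T (Sum.inr (Sum.inl ⟨m.1, m.1, 𝟙 m.1, m.2⟩))), ?_, ?_⟩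
    · apply cop_hom_ext hcp
      intro m
      rw [← Category.assoc, copDesc_fac, copDesc_fac, Category.comp_id]
    · apply cop_hom_ext hcp
      intro m
      rw [← Category.assoc, copDesc_fac, copDesc_fac, Category.comp_id]
      show copι hcp MJ ⟨m.1, m.2 ≫ D.map (𝟙 m.1)⟩ = copι hcp MJ m
      simp
  obtain ⟨Q, c, hcQ⟩ := hcoins _ _ (copDesc hcp b0) (copDesc hcp b1) hrefl
  have ptLe : ∀ t : T, b0 t ≫ c ≤ b1 t ≫ c := by
    intro t
    have h1 := pre_le hcomp (copι hcp T t) hcQ.1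
    rwa [← Category.assoc, ← Category.assoc, copDesc_fac, copDesc_fac] at h1
  have ptEq : ∀ (j j' : J) (α : j ⟶ j') (f : G ⟶ D.obj j),
      copι hcp MJ ⟨j, f⟩ ≫ c = copι hcp MJ ⟨j', f ≫ D.map α⟩ ≫ c :=
    fun j j' α f => le_antisymm (ptLe (Sum.inr (Sum.inl ⟨j, j', α, f⟩)))
      (ptLe (Sum.inr (Sum.inr ⟨j, j', α, f⟩)))
  have hκex : ∀ j : J, ∃ κj : D.obj j ⟶ Q, eps hcp (D.obj j) ≫ κj = k j ≫ c := by
    intro j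
    apply (hpres j).2.1
    apply cop_hom_le hcp
    intro x
    have h1 : (a0 j x ≫ k j) ≫ c ≤ (a1 j x ≫ k j) ≫ c := ptLe (Sum.inl ⟨j, x⟩)
    simp only [← Category.assoc, copDesc_fac]
    simpa only [Category.assoc] using h1
  choose κ hκ using hκex
  have hkc : ∀ (j : J) (f : G ⟶ D.obj j), f ≫ κ j = copι hcp MJ ⟨j, f⟩ ≫ c := by
    intro j f
    have h1 : (copι hcp (G ⟶ D.obj j) f ≫ eps hcp (D.obj j)) ≫ κ j
        = (copι hcp (G ⟶ D.obj j) f ≫ k j) ≫ c := by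
      rw [Category.assoc, Category.assoc, hκ j]
    rwa [eps_fac, hk] at h1
  have hnat : ∀ (j j' : J) (α : j ⟶ j'), D.map α ≫ κ j' = κ j := by
    intro j j' α
    refine coins_cancel (hpres j) ?_
    refine cop_hom_ext hcp ?_
    intro f
    simp only [← Category.assoc, eps_fac]
    rw [hkc j' (f ≫ D.map α), hkc j f]
    exact (ptEq j j' α f).symm
  have hdesc : ∀ s : Limits.Cocone D, ∃ u : Q ⟶ s.pt, ∀ j, κ j ≫ u = s.ι.app j := by
    intro s
    let hS : copObj hcp MJ ⟶ s.pt := copDesc hcp (fun m : MJ => m.2 ≫ s.ι.app m.1)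
    have hSfac : ∀ m : MJ, copι hcp MJ m ≫ hS = m.2 ≫ s.ι.app m.1 :=
      fun m => copDesc_fac hcp _ m
    have hkh : ∀ j : J, k j ≫ hS = eps hcp (D.obj j) ≫ s.ι.app j := by
      intro j
      apply cop_hom_ext hcp
      intro f
      simp only [← Category.assoc, eps_fac, hk]
      exact hSfac ⟨j, f⟩
    have hq : copDesc hcp b0 ≫ hS ≤ copDesc hcp b1 ≫ hS := by
      apply cop_hom_le hcp
      intro t
      have e0 : copι hcp T t ≫ copDesc hcp b0 ≫ hS = b0 t ≫ hS := by
        rw [← Category.assoc, copDesc_fac]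
      have e1 : copι hcp T t ≫ copDesc hcp b1 ≫ hS = b1 t ≫ hS := by
        rw [← Category.assoc, copDesc_fac]
      rw [e0, e1]
      rcases t with (⟨j, x⟩ | ⟨j, j', α, f⟩ | ⟨j, j', α, f⟩)
      · show (a0 j x ≫ k j) ≫ hS ≤ (a1 j x ≫ k j) ≫ hS
        have h0 : a0 j x ≫ eps hcp (D.obj j) ≤ a1 j x ≫ eps hcp (D.obj j) := by
          have h2 := pre_le hcomp (copι hcp (P j) x) (hpres j).1
          rwa [← Category.assoc, ← Category.assoc, copDesc_fac, copDesc_fac] at h2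
        calc (a0 j x ≫ k j) ≫ hS = (a0 j x ≫ eps hcp (D.obj j)) ≫ s.ι.app j := by
              rw [Category.assoc, hkh j, ← Category.assoc]
          _ ≤ (a1 j x ≫ eps hcp (D.obj j)) ≫ s.ι.app j := post_le hcomp _ h0
          _ = (a1 j x ≫ k j) ≫ hS := by rw [Category.assoc, Category.assoc, hkh j]
      · show copι hcp MJ ⟨j, f⟩ ≫ hS ≤ copι hcp MJ ⟨j', f ≫ D.map α⟩ ≫ hS
        have : copι hcp MJ ⟨j, f⟩ ≫ hS = copι hcp MJ (⟨j', f ≫ D.map α⟩ : MJ) ≫ hS := by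
          rw [hSfac, hSfac]
          show f ≫ s.ι.app j = (f ≫ D.map α) ≫ s.ι.app j'
          rw [Category.assoc, s.w α]
        exact this.le
      · show copι hcp MJ ⟨j', f ≫ D.map α⟩ ≫ hS ≤ copι hcp MJ ⟨j, f⟩ ≫ hS
        have : copι hcp MJ ⟨j, f⟩ ≫ hS = copι hcp MJ (⟨j', f ≫ D.map α⟩ : MJ) ≫ hS := by
          rw [hSfac, hSfac]
          show f ≫ s.ι.app j = (f ≫ D.map α) ≫ s.ι.app j'
          rw [Category.assoc, s.w α]
        exact this.ge
    obtain ⟨u, hu⟩ := hcQ.2.1 _ hS hq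
    refine ⟨u, ?_⟩
    intro j
    refine coins_cancel (hpres j) ?_
    rw [← Category.assoc, hκ j, Category.assoc, hu, hkh j]
  have huniq : ∀ (X : K) (u u' : Q ⟶ X), (∀ j, κ j ≫ u = κ j ≫ u') → u = u' := by
    intro X u u' h
    refine coins_cancel hcQ ?_
    refine cop_hom_ext hcp ?_
    intro m
    obtain ⟨j, f⟩ := m
    simp only [← Category.assoc]
    rw [← hkc j f, Category.assoc, Category.assoc, h j]
  exact Limits.HasColimit.mk
    { cocone :=
      { pt := Q
        ι :=
        { app := κ
          naturality := by intro j j' α; simpa using hnat j j' α } }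
      isColimit :=
      { desc := fun s => (hdesc s).choose
        fac := fun s j => (hdesc s).choose_spec j
        uniq := fun s m hm => huniq _ m _
          (fun j => by rw [hm j, (hdesc s).choose_spec j]) } }
lemma hasLimitAux (hcomp : CompMonotone K) (hskp : HasSubkernelPairs K)
    (hcoins : HasReflexiveCoinserters K) (hcp : HasEnrCopowers G)
    (hsg : StrongGeneratorE G) (hproj : SubregularProjective G)
    {J : Type v} [Category.{v} J] (D : J ⥤ K) : Limits.HasLimit D := by
  classical
  let N : Type v :=
    {n : ∀ j : J, G ⟶ D.obj j // ∀ (j j' : J) (α : j ⟶ j'), n j ≫ D.map α = n j'}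
  let φ : ∀ j : J, copObj hcp N ⟶ D.obj j := fun j => copDesc hcp (fun n => n.1 j)
  have hφ : ∀ (n : N) (j : J), copι hcp N n ≫ φ j = n.1 j :=
    fun n j => copDesc_fac hcp _ n
  have hφnat : ∀ (j j' : J) (α : j ⟶ j'), φ j ≫ D.map α = φ j' := by
    intro j j' α
    apply cop_hom_ext hcp
    intro n
    rw [← Category.assoc, hφ, hφ, n.2 j j' α]
  let S : Type v :=
    {p : (G ⟶ copObj hcp N) × (G ⟶ copObj hcp N) // ∀ j, p.1 ≫ φ j ≤ p.2 ≫ φ j}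
  let b0 : S → (G ⟶ copObj hcp N) := fun s => s.1.1
  let b1 : S → (G ⟶ copObj hcp N) := fun s => s.1.2
  have hrefl : ReflexivePair (copDesc hcp b0) (copDesc hcp b1) := by
    refine ⟨copDesc hcp (fun n : N =>
      copι hcp S ⟨(copι hcp N n, copι hcp N n), fun j => le_rfl⟩), ?_, ?_⟩
    · apply cop_hom_ext hcp
      intro n
      rw [← Category.assoc, copDesc_fac, copDesc_fac, Category.comp_id]
    · apply cop_hom_ext hcp
      intro n
      rw [← Category.assoc, copDesc_fac, copDesc_fac, Category.comp_id]
  obtain ⟨L, c, hcL⟩ := hcoins _ _ (copDesc hcp b0) (copDesc hcp b1) hrefl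
  have hπex : ∀ j : J, ∃ πj : L ⟶ D.obj j, c ≫ πj = φ j := by
    intro j
    apply hcL.2.1
    apply cop_hom_le hcp
    intro s
    have := s.2 j
    rw [← Category.assoc, ← Category.assoc, copDesc_fac, copDesc_fac]
    exact this
  choose π hπ using hπex
  have hπnat : ∀ (j j' : J) (α : j ⟶ j'), π j ≫ D.map α = π j' := by
    intro j j' α
    refine coins_cancel hcL ?_
    rw [← Category.assoc, hπ j, hπ j', hφnat j j' α]
  have hreflect : ∀ (g g' : G ⟶ L), (∀ j, g ≫ π j ≤ g' ≫ π j) → g ≤ g' := by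
    intro g g' hle
    obtain ⟨w, hw⟩ := lift_through hproj hrefl hcL g
    obtain ⟨w', hw'⟩ := lift_through hproj hrefl hcL g'
    have hws : ∀ j, w ≫ φ j ≤ w' ≫ φ j := by
      intro j
      rw [← hπ j, ← Category.assoc, ← Category.assoc, hw, hw']
      exact hle j
    have h1 := pre_le hcomp (copι hcp S ⟨(w, w'), hws⟩) hcL.1
    rw [← Category.assoc, ← Category.assoc, copDesc_fac, copDesc_fac] at h1
    rw [← hw, ← hw']
    exact h1
  have hpoint : ∀ (g g' : G ⟶ L), (∀ j, g ≫ π j = g' ≫ π j) → g = g' :=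
    fun g g' h => le_antisymm (hreflect g g' fun j => (h j).le)
      (hreflect g' g fun j => (h j).ge)
  have hlift : ∀ s : Limits.Cone D,
      ∃ t : s.pt ⟶ L, ∀ j, t ≫ π j = s.π.app j := by
    intro s
    obtain ⟨P, a0, a1, hpx⟩ := eps_pres hcomp hskp hcoins hcp hsg hproj s.pt
    let nfun : (G ⟶ s.pt) → N := fun f =>
      ⟨fun j => f ≫ s.π.app j, fun j j' α => by rw [Category.assoc, s.w α]⟩
    let tS : copObj hcp (G ⟶ s.pt) ⟶ L :=
      copDesc hcp (fun f => copι hcp N (nfun f) ≫ c)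
    have htSfac : ∀ f : G ⟶ s.pt,
        copι hcp (G ⟶ s.pt) f ≫ tS = copι hcp N (nfun f) ≫ c :=
      fun f => copDesc_fac hcp _ f
    have htSπ : ∀ j : J, tS ≫ π j = eps hcp s.pt ≫ s.π.app j := by
      intro j
      apply cop_hom_ext hcp
      intro f
      simp only [← Category.assoc, eps_fac, htSfac]
      rw [Category.assoc, hπ j, hφ]
    have hle : copDesc hcp a0 ≫ tS ≤ copDesc hcp a1 ≫ tS := by
      apply cop_hom_le hcp
      intro x
      have e0 : copι hcp P x ≫ copDesc hcp a0 ≫ tS = (a0 x ≫ tS) := by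
        rw [← Category.assoc, copDesc_fac]
      have e1 : copι hcp P x ≫ copDesc hcp a1 ≫ tS = (a1 x ≫ tS) := by
        rw [← Category.assoc, copDesc_fac]
      rw [e0, e1]
      have h0 : a0 x ≫ eps hcp s.pt ≤ a1 x ≫ eps hcp s.pt := by
        have h2 := pre_le hcomp (copι hcp P x) hpx.1
        rwa [← Category.assoc, ← Category.assoc, copDesc_fac, copDesc_fac] at h2
      apply hreflect
      intro j
      calc (a0 x ≫ tS) ≫ π j = (a0 x ≫ eps hcp s.pt) ≫ s.π.app j := by
            rw [Category.assoc, htSπ j, ← Category.assoc]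
        _ ≤ (a1 x ≫ eps hcp s.pt) ≫ s.π.app j := post_le hcomp _ h0
        _ = (a1 x ≫ tS) ≫ π j := by rw [Category.assoc, Category.assoc, htSπ j]
    obtain ⟨t, ht⟩ := hpx.2.1 _ tS hle
    refine ⟨t, ?_⟩
    intro j
    refine coins_cancel hpx ?_
    rw [← Category.assoc, ht, htSπ j]
  have huniq : ∀ (s : Limits.Cone D) (m m' : s.pt ⟶ L),
      (∀ j, m ≫ π j = s.π.app j) → (∀ j, m' ≫ π j = s.π.app j) → m = m' := by
    intro s m m' h h'
    obtain ⟨P, a0, a1, hpx⟩ := eps_pres hcomp hskp hcoins hcp hsg hproj s.pt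
    refine coins_cancel hpx ?_
    refine cop_hom_ext hcp ?_
    intro f
    have hf : f ≫ m = f ≫ m' := by
      apply hpoint
      intro j
      rw [Category.assoc, Category.assoc, h j, h' j]
    simp only [← Category.assoc, eps_fac]
    rw [hf]
  exact Limits.HasLimit.mk
    { cone :=
      { pt := L
        π :=
        { app := π
          naturality := by intro j j' α; simpa using (hπnat j j' α).symm } }
      isLimit :=
      { lift := fun s => (hlift s).choose
        fac := fun s j => (hlift s).choose_spec j
        uniq := fun s m hm => huniq s m _ hm (hlift s).choose_spec } }

end Constructions
/-- an order-enriched category with subkernel pairs, coinserters of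
reflexive pairs and a subvarietal generator is complete and cocomplete. -/
theorem stmt17 {K : Type u} [Category.{v} K] [∀ X Y : K, PartialOrder (X ⟶ Y)]
    (hcomp : CompMonotone K)
    (hskp : HasSubkernelPairs K) (hcoins : HasReflexiveCoinserters K)
    (G : K) (hG : SubvarietalGenerator G) :
    Limits.HasLimitsOfSize.{v, v} K ∧ Limits.HasColimitsOfSize.{v, v} K := by
  obtain ⟨hcp, hsg, _hfin, hproj⟩ := hG
  constructor
  · exact ⟨fun {J} _ => ⟨fun D => hasLimitAux hcomp hskp hcoins hcp hsg hproj D⟩⟩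
  · exact ⟨fun {J} _ => ⟨fun D => hasColimitAux hcomp hskp hcoins hcp hsg hproj D⟩⟩

end Paper
end

section
/- Let K be an order-enriched category with subkernel pairs and their coinserters, and let G be a subregularly projective strong generator with copowers. Then every morphism f : A → B of K factors as f = m ∘ c where c is a subregular epimorphism (the coinserter of the subkernel pair of f) and m is an embedding (m∘u0 ≤ m∘u1 implies u0 ≤ u1 for all u0, u1). -/
open CategoryTheory

universe v u

namespace Paper

/- An order-enriched category: a category with a partial order on each hom-set
such that composition is monotone in both variables. -/
variable {K : Type u} [Category.{v} K] [∀ X Y : K, PartialOrder (X ⟶ Y)]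

/-- in an order-enriched category with subkernel pairs and their
coinserters and a subregularly projective strong generator with copowers, every
morphism factors as a subregular epimorphism (the coinserter of its subkernel pair)
followed by an embedding. -/
theorem stmt18 {K : Type u} [Category.{v} K] [∀ X Y : K, PartialOrder (X ⟶ Y)]
    (hcomp : CompMonotone K)
    (hskp : HasSubkernelPairs K) (hcoins : HasCoinsertersOfSubkernelPairs K)
    (G : K) (hcop : HasEnrCopowers G) (hproj : SubregularProjective G)
    (hstrong : StrongGeneratorE G) :
    ∀ (A B : K) (f : A ⟶ B), ∃ (C : K) (c : A ⟶ C) (m : C ⟶ B),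
      c ≫ m = f ∧ IsSubregularEpi c ∧ EmbeddingMor m ∧
        ∃ (R : K) (r0 r1 : R ⟶ A), IsSubkernelPairOf r0 r1 f ∧ IsCoinserterOf r0 r1 c := by
  intro A B f
  obtain ⟨R, r0, r1, hr⟩ := hskp A B f
  obtain ⟨C, c, hc⟩ := hcoins R A B f r0 r1 hr
  obtain ⟨hrefl, hle, hfact⟩ := hr
  obtain ⟨m, hm⟩ := hc.2.1 B f hle
  obtain ⟨dA, hd0, hd1⟩ := hfact A (𝟙 A) (𝟙 A) le_rfl
  have hcepi : IsSubregularEpi c := ⟨R, r0, r1, ⟨dA, hd0, hd1⟩, hc⟩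
  obtain ⟨S, s0, s1, hs⟩ := hskp C B m
  obtain ⟨D, dmor, hd⟩ := hcoins S C B m s0 s1 hs
  obtain ⟨dS, hdS0, hdS1⟩ := hs.2.2 C (𝟙 C) (𝟙 C) le_rfl
  have hdepi : IsSubregularEpi dmor := ⟨S, s0, s1, ⟨dS, hdS0, hdS1⟩, hd⟩
  obtain ⟨m', hm'⟩ := hd.2.1 B m hs.2.1
  have hrefl' : ∀ g g' : G ⟶ C, g ≫ dmor ≤ g' ≫ dmor → g ≤ g' := by
    intro g g' hgg
    obtain ⟨a, ha⟩ := hproj A C c hcepi g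
    obtain ⟨a', ha'⟩ := hproj A C c hcepi g'
    have h1 : g ≫ m ≤ g' ≫ m := by
      rw [← hm']
      have := hcomp _ _ _ _ _ m' m' hgg le_rfl
      simpa using this
    have haf : a ≫ f ≤ a' ≫ f := by
      calc a ≫ f = g ≫ m := by rw [← hm, ← ha]; simp
      _ ≤ g' ≫ m := h1
      _ = a' ≫ f := by rw [← hm, ← ha']; simp
    obtain ⟨t, ht0, ht1⟩ := hfact G a a' haf
    calc g = t ≫ (r0 ≫ c) := by rw [← ha, ← ht0]; simp
    _ ≤ t ≫ (r1 ≫ c) := hcomp _ _ _ t t _ _ le_rfl hc.1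
    _ = g' := by rw [← ha', ← ht1]; simp
  have hbij : Function.Bijective (fun g : G ⟶ C => g ≫ dmor) := by
    constructor
    · intro g g' h
      simp only at h
      exact le_antisymm (hrefl' _ _ h.le) (hrefl' _ _ h.ge)
    · intro g
      obtain ⟨a, ha⟩ := hproj C D dmor hdepi g
      exact ⟨a, ha⟩
  have hiff : ∀ g g' : G ⟶ C, g ≫ dmor ≤ g' ≫ dmor ↔ g ≤ g' :=
    fun g g' => ⟨hrefl' g g', fun h => hcomp _ _ _ _ _ _ _ h le_rfl⟩
  have : IsIso dmor := hstrong C D dmor hbij hiff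
  have hs01 : s0 ≤ s1 := by
    have := hcomp _ _ _ _ _ (inv dmor) (inv dmor) hd.1 le_rfl
    simpa using this
  refine ⟨C, c, m, hm, hcepi, ?_, R, r0, r1, ⟨hrefl, hle, hfact⟩, hc⟩
  intro U u0 u1 hu
  obtain ⟨t, ht0, ht1⟩ := hs.2.2 U u0 u1 hu
  calc u0 = t ≫ s0 := ht0.symm
  _ ≤ t ≫ s1 := hcomp _ _ _ t t _ _ le_rfl hs01
  _ = u1 := ht1


end Paper
end

section
/- Let K be an order-enriched category with subkernel pairs and their coinserters, and let G be a subregularly projective strong generator with copowers. Then G is a subregular generator: for every object X the canonical morphism [h] : ∐_{h ∈ K(G,X)} G → X is a subregular epimorphism (it is the coinserter of the subkernel pair of [h], which is a reflexive pair). -/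
open CategoryTheory

universe v u

namespace Paper

/- An order-enriched category: a category with a partial order on each hom-set
such that composition is monotone in both variables. -/
variable {K : Type u} [Category.{v} K] [∀ X Y : K, PartialOrder (X ⟶ Y)]

/-- in an order-enriched category with subkernel pairs and their
coinserters, a subregularly projective strong generator with copowers is a subregular
generator: every canonical morphism `[h] : ∐_{h : G ⟶ X} G ⟶ X` is a subregular
epimorphism, namely the coinserter of its subkernel pair, which is a reflexive pair. -/
theorem stmt19 {K : Type u} [Category.{v} K] [∀ X Y : K, PartialOrder (X ⟶ Y)]
    (hcomp : CompMonotone K)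
    (hskp : HasSubkernelPairs K) (hcoins : HasCoinsertersOfSubkernelPairs K)
    (G : K) (hcop : HasEnrCopowers G) (hproj : SubregularProjective G)
    (hstrong : StrongGeneratorE G) :
    ∀ (X C : K) (ι : (G ⟶ X) → (G ⟶ C)), IsEnrCopower G (G ⟶ X) C ι →
      ∀ d : C ⟶ X, (∀ h, ι h ≫ d = h) →
        IsSubregularEpi d ∧
          ∃ (R : K) (r0 r1 : R ⟶ C), IsSubkernelPairOf r0 r1 d ∧
            ReflexivePair r0 r1 ∧ IsCoinserterOf r0 r1 d := by
  intro X C ι _hcp d hd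
  obtain ⟨R, r0, r1, hsk⟩ := hskp C X d
  obtain ⟨horef, hle, huniv⟩ := hsk
  -- reflexivity of the subkernel pair
  have hrefl : ReflexivePair r0 r1 := by
    obtain ⟨t, ht0, ht1⟩ := huniv C (𝟙 C) (𝟙 C) le_rfl
    exact ⟨t, ht0, ht1⟩
  -- coinserter of the subkernel pair
  obtain ⟨Z, c, hco⟩ := hcoins R C X d r0 r1 ⟨horef, hle, huniv⟩
  obtain ⟨hc1, hc2, hc3⟩ := hco
  -- d factors through c
  obtain ⟨p, hp⟩ := hc2 X d hle
  -- c is a subregular epi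
  have hcsub : IsSubregularEpi c := ⟨R, r0, r1, hrefl, hc1, hc2, hc3⟩
  -- K(G,p) reflects order
  have horder : ∀ f f' : G ⟶ Z, f ≫ p ≤ f' ≫ p → f ≤ f' := by
    intro f f' hff
    obtain ⟨a, ha⟩ := hproj C Z c hcsub f
    obtain ⟨a', ha'⟩ := hproj C Z c hcsub f'
    have had : a ≫ d ≤ a' ≫ d := by
      have : a ≫ c ≫ p ≤ a' ≫ c ≫ p := by
        rw [← Category.assoc, ← Category.assoc, ha, ha']; exact hff
      rwa [hp] at this
    obtain ⟨t, ht0, ht1⟩ := huniv G a a' had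
    have : t ≫ r0 ≫ c ≤ t ≫ r1 ≫ c := hcomp _ _ _ t t _ _ le_rfl hc1
    rw [← Category.assoc, ← Category.assoc, ht0, ht1, ha, ha'] at this
    exact this
  -- K(G,p) is bijective
  have hbij : Function.Bijective (fun f : G ⟶ Z => f ≫ p) := by
    constructor
    · intro f f' h
      simp only at h
      exact le_antisymm (horder f f' h.le) (horder f' f h.ge)
    · intro h
      refine ⟨ι h ≫ c, ?_⟩
      simp only [Category.assoc, hp, hd]
  have := hstrong Z X p hbij (fun f f' =>
    ⟨horder f f', fun h => hcomp _ _ _ f f' p p h le_rfl⟩)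
  -- p is iso; transfer the coinserter along p
  have hinv : ∀ {U : K} (u0 u1 : X ⟶ U), p ≫ u0 ≤ p ≫ u1 → u0 ≤ u1 := by
    intro U u0 u1 h
    have := hcomp _ _ _ (inv p) (inv p) _ _ le_rfl h
    simpa using this
  have hcoind : IsCoinserterOf r0 r1 d := by
    refine ⟨?_, ?_, ?_⟩
    · rw [← hp, ← Category.assoc, ← Category.assoc]
      exact hcomp _ _ _ _ _ p p hc1 le_rfl
    · intro Z' c' hc'
      obtain ⟨g, hg⟩ := hc2 Z' c' hc'
      exact ⟨inv p ≫ g, by rw [← hp]; simp [hg]⟩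
    · intro U u0 u1 h
      apply hinv
      apply hc3
      rw [← Category.assoc, ← Category.assoc, hp]
      exact h
  exact ⟨⟨R, r0, r1, hrefl, hcoind⟩, R, r0, r1, ⟨horef, hle, huniv⟩, hrefl, hcoind⟩

end Paper
end
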